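/- arXiv:2412.17466 — 4 statements merged into one kernel-verified Lean document; each statement's English description precedes it below -/
import Mathlib

section
/- Let q ≥ 2 be an even integer and define Φ(x,y) = sign(cos(2πx)) · sign(cos(2πy)). Then ∫_0^1 Φ(t, q t) dt = 0. -/
open Real

/-- `sign(x) = 1` if `x ≥ 0` and `-1` otherwise. -/
noncomputable def sgn (x : ℝ) : ℝ := if 0 ≤ x then 1 else -1

lemma sgn_neg_of_ne {x : ℝ} (hx : x ≠ 0) : sgn (-x) = - sgn x := by
  rcases hx.lt_or_gt with h | h
  · have h1 : (0:ℝ) ≤ -x := by linarith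
    simp [sgn, h1, not_le.mpr h]
  · have h1 : ¬ (0:ℝ) ≤ -x := by linarith
    simp [sgn, h1, h.le]

lemma measurable_sgn : Measurable sgn := by
  unfold sgn
  exact Measurable.ite (measurableSet_le measurable_const measurable_id)
    measurable_const measurable_const

lemma abs_sgn_le (x : ℝ) : |sgn x| ≤ 1 := by
  unfold sgn; split <;> simp

theorem stmt5 (q : ℤ) (hq : 2 ≤ q) (heven : Even q) :
    ∫ t in (0:ℝ)..1, sgn (Real.cos (2 * π * t)) * sgn (Real.cos (2 * π * (q * t))) = 0 := by
  set F : ℝ → ℝ := fun t => sgn (Real.cos (2 * π * t)) * sgn (Real.cos (2 * π * (q * t)))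
    with hF
  have hmeas : Measurable F := by
    apply Measurable.mul
    · exact measurable_sgn.comp (Real.continuous_cos.measurable.comp
        (measurable_const.mul measurable_id))
    · exact measurable_sgn.comp (Real.continuous_cos.measurable.comp
        (measurable_const.mul (measurable_const.mul measurable_id)))
  have hbound : ∀ t, |F t| ≤ 1 := by
    intro t
    rw [hF]
    simp only [abs_mul]
    calc |sgn (Real.cos (2 * π * t))| * |sgn (Real.cos (2 * π * (q * t)))|
        ≤ 1 * 1 := mul_le_mul (abs_sgn_le _) (abs_sgn_le _) (abs_nonneg _) zero_le_one
      _ = 1 := by ring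
  have hint : ∀ a b : ℝ, IntervalIntegrable F MeasureTheory.volume a b := by
    intro a b
    constructor <;>
      exact (MeasureTheory.integrable_const (1:ℝ)).mono'
        hmeas.aestronglyMeasurable (MeasureTheory.ae_of_all _ fun x => by simpa using hbound x)
  have hzero : ∀ᵐ t : ℝ, Real.cos (2 * π * t) ≠ 0 := by
    have hc : Set.Countable {t : ℝ | Real.cos (2 * π * t) = 0} := by
      apply Set.Countable.mono _ (Set.countable_range (fun k : ℤ => ((2 * k + 1 : ℝ)) / 4))
      intro t ht
      rw [Set.mem_setOf_eq, Real.cos_eq_zero_iff] at ht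
      obtain ⟨n, hn⟩ := ht
      refine ⟨n, ?_⟩
      have hπ := Real.pi_pos
      have : 2 * π * t = (2 * n + 1) * π / 2 := by linarith [hn]
      field_simp
      nlinarith [this]
    have := hc.measure_zero (MeasureTheory.volume : MeasureTheory.Measure ℝ)
    exact (MeasureTheory.ae_iff).mpr (by simpa using this)
  obtain ⟨m, hm⟩ := heven
  have key : ∀ t : ℝ, Real.cos (2 * π * t) ≠ 0 → F (t + 1/2) = - F t := by
    intro t ht
    have h1 : (2:ℝ) * π * (t + 1/2) = 2 * π * t + π := by ring
    have h2 : (2:ℝ) * π * ((q:ℝ) * (t + 1/2)) = 2 * π * ((q:ℝ) * t) + (m:ℝ) * (2 * π) := by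
      have : (q:ℝ) = (m:ℝ) + (m:ℝ) := by exact_mod_cast congrArg Int.cast hm
      rw [this]; ring
    rw [hF]
    simp only
    rw [h1, h2, Real.cos_add_pi, Real.cos_add_int_mul_two_pi, sgn_neg_of_ne ht]
    ring
  have hsplit : (∫ t in (0:ℝ)..1, F t)
      = (∫ t in (0:ℝ)..(1/2), F t) + ∫ t in (1/2:ℝ)..1, F t :=
    (intervalIntegral.integral_add_adjacent_intervals (hint 0 (1/2)) (hint (1/2) 1)).symm
  have hshift : (∫ t in (1/2:ℝ)..1, F t) = ∫ t in (0:ℝ)..(1/2), F (t + 1/2) := by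
    rw [intervalIntegral.integral_comp_add_right]
    norm_num
  have hneg : (∫ t in (0:ℝ)..(1/2), F (t + 1/2)) = - ∫ t in (0:ℝ)..(1/2), F t := by
    rw [← intervalIntegral.integral_neg]
    apply intervalIntegral.integral_congr_ae
    filter_upwards [hzero] with t ht _
    exact key t ht
  calc (∫ t in (0:ℝ)..1, F t)
      = (∫ t in (0:ℝ)..(1/2), F t) + ∫ t in (1/2:ℝ)..1, F t := hsplit
    _ = (∫ t in (0:ℝ)..(1/2), F t) + - ∫ t in (0:ℝ)..(1/2), F t := by rw [hshift, hneg]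
    _ = 0 := by ring
end

section
/- Let n be an odd prime and let b be an integer with 1 ≤ b ≤ n-1. Then |Σ_{k=1}^{n-1} sign(cos(2πbk/n))| ≤ 2. -/
open Real Finset

lemma key_mod (n c d k : ℕ) (h : c * d ≡ 1 [MOD n]) (hk : k < n) :
    c * (d * k % n) % n = k := by
  have h1 : c * (d * k % n) ≡ c * (d * k) [MOD n] :=
    Nat.ModEq.mul_left c (Nat.mod_modEq (d * k) n)
  have h2 : c * (d * k) ≡ k [MOD n] := by
    have := h.mul_right k
    simpa [mul_assoc, one_mul] using this
  have := (h1.trans h2)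
  calc c * (d * k % n) % n = k % n := this
    _ = k := Nat.mod_eq_of_lt hk

theorem stmt7 (n : ℕ) (hn : n.Prime) (hodd : Odd n) (b : ℕ) (hb1 : 1 ≤ b) (hbn : b ≤ n - 1) :
    |∑ k ∈ Finset.Icc 1 (n - 1), sgn (Real.cos (2 * π * b * k / n))| ≤ 2 := by
  haveI := Fact.mk hn
  have hn2 : 2 ≤ n := hn.two_le
  have hn3 : 3 ≤ n := by
    rcases hodd with ⟨m, hm⟩; omega
  have hn0 : (0:ℕ) < n := by omega
  have hn0' : (n:ℝ) ≠ 0 := Nat.cast_ne_zero.mpr (by omega)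
  have hnR : (0:ℝ) < n := by exact_mod_cast hn0
  -- b is not divisible by n
  have hbnd : ¬ n ∣ b := by
    intro hd
    rcases hd with ⟨c, rfl⟩
    rcases Nat.eq_zero_or_pos c with rfl | hc
    · omega
    · have : n ≤ n * c := Nat.le_mul_of_pos_right n hc
      omega
  -- Fermat's little theorem in ℕ
  have hbz : (b : ZMod n) ≠ 0 := by
    intro h0
    exact hbnd ((ZMod.natCast_eq_zero_iff b n).mp h0)
  have hfermat : b ^ (n - 1) ≡ 1 [MOD n] := by
    have := ZMod.pow_card_sub_one_eq_one hbz
    have h' : ((b ^ (n-1) : ℕ) : ZMod n) = ((1 : ℕ) : ZMod n) := by push_cast; simpa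
    exact (ZMod.natCast_eq_natCast_iff _ _ _).mp h'
  have hmul1 : b * b ^ (n - 2) ≡ 1 [MOD n] := by
    have : b * b ^ (n - 2) = b ^ (n - 1) := by
      rw [← pow_succ']
      congr 1
      omega
    rw [this]; exact hfermat
  have hmul2 : b ^ (n - 2) * b ≡ 1 [MOD n] := by
    rwa [mul_comm] at hmul1
  -- membership helper
  have hmem : ∀ c k : ℕ, ¬ n ∣ c → k ∈ Finset.Icc 1 (n-1) → c * k % n ∈ Finset.Icc 1 (n-1) := by
    intro c k hc hk
    rw [Finset.mem_Icc] at hk ⊢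
    have hlt : c * k % n < n := Nat.mod_lt _ hn0
    have hne : c * k % n ≠ 0 := by
      intro h0
      have : n ∣ c * k := Nat.dvd_of_mod_eq_zero h0
      rcases (hn.dvd_mul.mp this) with h | h
      · exact hc h
      · have : n ∣ k := h
        have := Nat.le_of_dvd (by omega) this
        omega
    omega
  -- Step 1 : reindex
  have hstep1 : ∑ k ∈ Finset.Icc 1 (n - 1), sgn (Real.cos (2 * π * b * k / n))
      = ∑ k ∈ Finset.Icc 1 (n - 1), sgn (Real.cos (2 * π * k / n)) := by
    refine Finset.sum_nbij' (fun k => b * k % n) (fun k => b ^ (n-2) * k % n)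
      (fun a ha => hmem b a hbnd ha)
      (fun a ha => hmem (b ^ (n-2)) a (fun hd => hbnd (hn.dvd_of_dvd_pow hd)) ha)
      (fun a ha => by
        rw [Finset.mem_Icc] at ha
        exact key_mod n (b ^ (n-2)) b a hmul2 (by omega))
      (fun a ha => by
        rw [Finset.mem_Icc] at ha
        exact key_mod n b (b ^ (n-2)) a hmul1 (by omega))
      (fun a ha => by
        -- cos periodicity
        congr 1
        set q := b * a / n with hq
        set r := b * a % n with hr
        have hdiv : n * q + r = b * a := Nat.div_add_mod (b*a) n
        have hcast : (b:ℝ) * a = n * q + r := by exact_mod_cast hdiv.symm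
        have : 2 * π * b * a / n = 2 * π * r / n + (q:ℤ) * (2 * π) := by
          push_cast
          field_simp
          linear_combination hcast
        rw [this, Real.cos_add_int_mul_two_pi])
  rw [hstep1]
  -- Step 2 : evaluate signs
  have hstep2 : ∀ k ∈ Finset.Icc 1 (n-1),
      sgn (Real.cos (2 * π * k / n)) = if (4 * k < n ∨ 3 * n < 4 * k) then (1:ℝ) else -1 := by
    intro k hk
    rw [Finset.mem_Icc] at hk
    have hk1 : (1:ℝ) ≤ k := by exact_mod_cast hk.1
    have hk2 : (k:ℝ) ≤ n - 1 := by
      have : (k:ℝ) ≤ ((n-1 : ℕ) : ℝ) := by exact_mod_cast hk.2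
      rw [Nat.cast_sub (by omega)] at this; simpa using this
    have hpi := Real.pi_pos
    have hiff : 0 ≤ Real.cos (2 * π * k / n) ↔ (4 * k < n ∨ 3 * n < 4 * k) := by
      constructor
      · intro hpos
        by_contra hcon
        push_neg at hcon
        obtain ⟨h1, h2⟩ := hcon
        -- n ≤ 4k and 4k ≤ 3n ; since n odd, strict
        have h1' : n < 4 * k := by
          rcases hodd with ⟨m, hm⟩; omega
        have h2' : 4 * k < 3 * n := by
          rcases hodd with ⟨m, hm⟩; omega
        have h1R : (n:ℝ) < 4 * k := by exact_mod_cast h1'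
        have h2R : (4:ℝ) * k < 3 * n := by exact_mod_cast h2'
        have hlt : Real.cos (2 * π * k / n) < 0 := by
          apply Real.cos_neg_of_pi_div_two_lt_of_lt
          · rw [lt_div_iff₀ hnR]; nlinarith
          · rw [div_lt_iff₀ hnR]; nlinarith
        linarith
      · intro h
        rcases h with h | h
        · have hR : (4:ℝ) * k < n := by exact_mod_cast h
          apply Real.cos_nonneg_of_mem_Icc
          constructor
          · have : 0 ≤ 2 * π * k / n := by positivity
            linarith
          · rw [div_le_iff₀ hnR]; nlinarith
        · have hR : (3:ℝ) * n < 4 * k := by exact_mod_cast h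
          have heq : Real.cos (2 * π * k / n) = Real.cos (2 * π * k / n + (-1 : ℤ) * (2 * π)) :=
            (Real.cos_add_int_mul_two_pi _ _).symm
          rw [heq]
          apply Real.cos_nonneg_of_mem_Icc
          have hlow : 3 * π / 2 ≤ 2 * π * k / n := by
            rw [le_div_iff₀ hnR]; nlinarith
          have hup : 2 * π * k / n ≤ 2 * π := by
            rw [div_le_iff₀ hnR]; nlinarith
          constructor <;> push_cast <;> linarith
    simp only [sgn]
    by_cases hcase : (4 * k < n ∨ 3 * n < 4 * k)
    · rw [if_pos (hiff.mpr hcase), if_pos hcase]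
    · rw [if_neg (fun hp => hcase (hiff.mp hp)), if_neg hcase]
  rw [Finset.sum_congr rfl hstep2]
  -- Step 3 : count
  have hrw : ∀ k : ℕ, (if (4 * k < n ∨ 3 * n < 4 * k) then (1:ℝ) else -1)
      = (if (4 * k < n ∨ 3 * n < 4 * k) then (2:ℝ) else 0) - 1 := by
    intro k; by_cases h : (4 * k < n ∨ 3 * n < 4 * k) <;> simp [h] <;> norm_num
  simp_rw [hrw]
  rw [Finset.sum_sub_distrib, Finset.sum_const, ← Finset.sum_filter]
  rw [Finset.sum_const]
  have hfilter : Finset.filter (fun k => 4 * k < n ∨ 3 * n < 4 * k) (Finset.Icc 1 (n-1))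
      = Finset.Icc 1 ((n-1)/4) ∪ Finset.Icc (3*n/4 + 1) (n-1) := by
    ext a
    simp only [Finset.mem_filter, Finset.mem_Icc, Finset.mem_union]
    omega
  rw [hfilter, Finset.card_union_of_disjoint (by
    rw [Finset.disjoint_left]
    intro a ha hb
    rw [Finset.mem_Icc] at ha hb
    omega), Nat.card_Icc, Nat.card_Icc, Nat.card_Icc]
  -- now pure arithmetic
  obtain ⟨m, hm⟩ := hodd
  have harith1 : ((n-1)/4 + 1 - 1) + ((n-1) + 1 - (3*n/4+1)) ≤ (n-1+1-1) := by omega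
  have harith2 : (n-1+1-1) ≤ 2 * (((n-1)/4 + 1 - 1) + ((n-1) + 1 - (3*n/4+1))) + 2 := by omega
  have harith3 : 2 * (((n-1)/4 + 1 - 1) + ((n-1) + 1 - (3*n/4+1))) ≤ (n-1+1-1) := by omega
  set c := ((n-1)/4 + 1 - 1) + ((n-1) + 1 - (3*n/4+1)) with hc
  set N := (n-1+1-1) with hN
  rw [abs_le]
  have hcR : ((c:ℝ)) ≤ N := by exact_mod_cast harith1
  have hNR : (N:ℝ) ≤ 2 * c + 2 := by exact_mod_cast harith2
  have hc2R : 2 * (c:ℝ) ≤ N := by exact_mod_cast harith3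
  constructor
  · simp only [nsmul_eq_mul, smul_eq_mul]
    push_cast
    linarith
  · simp only [nsmul_eq_mul, smul_eq_mul]
    push_cast
    linarith
end

section
/- Let n be a natural number, p a prime divisor of n, c coprime to p, and a coprime to n. Fix i ∈ {0,...,p-1} and let S_i = {j : 1 ≤ j ≤ n, cj ≡ i (mod p)}. Then the set M_i = {aj/n mod 1 : j ∈ S_i} consists of exactly n/p points that are equispaced on the torus with gap p/n, i.e. M_i = {a d_i/n + j p/n mod 1 : j = 0, ..., n/p - 1} for some d_i ∈ {1, ..., p}. -/
open Finset

private lemma fract_shift (n p m : ℕ) (hn : 0 < n) (hpm : p * m = n) (t : ℝ)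
    (k j : ℕ) (h : (m : ℤ) ∣ (k : ℤ) - j) :
    Int.fract (t + (k : ℝ) * p / n) = Int.fract (t + (j : ℝ) * p / n) := by
  obtain ⟨q, hq⟩ := h
  have hn0 : (n : ℝ) ≠ 0 := Nat.cast_ne_zero.mpr hn.ne'
  have hk : (k : ℝ) = (j : ℝ) + (m : ℝ) * q := by
    have := congrArg (fun z : ℤ => (z : ℝ)) hq
    push_cast at this
    linarith
  have hmp : (p : ℝ) * m = n := by exact_mod_cast congrArg (fun x : ℕ => (x : ℝ)) hpm
  have heq : t + (k : ℝ) * p / n = (t + (j : ℝ) * p / n) + (q : ℤ) := by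
    have hq' : ((q : ℤ) : ℝ) = (m : ℝ) * q * p / n := by
      rw [eq_div_iff hn0, ← hmp]; ring
    rw [hk]; nth_rewrite 2 [hq']; ring
  rw [heq, Int.fract_add_intCast]

/-- The set `M_i = {aj/n mod 1 : j ∈ S_i}` consists of exactly `n/p` equispaced points
with gap `p/n` on the torus. -/
theorem stmt13 (n p : ℕ) (hn : 0 < n) (hp : p.Prime) (hpn : p ∣ n)
    (c : ℕ) (hc : Nat.Coprime c p) (a : ℕ) (ha : Nat.Coprime a n)
    (i : ℕ) (hi : i < p) :
    ∃ d : ℕ, 1 ≤ d ∧ d ≤ p ∧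
      {x : ℝ | ∃ j : ℕ, 1 ≤ j ∧ j ≤ n ∧ (c * j) % p = i ∧
          x = Int.fract ((a : ℝ) * j / n)} =
        {x : ℝ | ∃ j : ℕ, j < n / p ∧
          x = Int.fract ((a : ℝ) * d / n + (j : ℝ) * p / n)} ∧
      {x : ℝ | ∃ j : ℕ, 1 ≤ j ∧ j ≤ n ∧ (c * j) % p = i ∧
          x = Int.fract ((a : ℝ) * j / n)}.ncard = n / p := by
  have hp0 : 0 < p := hp.pos
  set m := n / p with hm_def
  have hpm : p * m = n := Nat.mul_div_cancel' hpn
  have hm : 0 < m := Nat.div_pos (Nat.le_of_dvd hn hpn) hp0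
  haveI : NeZero p := ⟨hp0.ne'⟩
  haveI : NeZero m := ⟨hm.ne'⟩
  haveI hfact : Fact p.Prime := ⟨hp⟩
  have ham : Nat.Coprime a m := Nat.Coprime.coprime_dvd_right ⟨p, by rw [← hpm, mul_comm]⟩ ha
  have hn0 : (n : ℝ) ≠ 0 := Nat.cast_ne_zero.mpr hn.ne'
  have hnR : (0 : ℝ) < n := by exact_mod_cast hn
  have hpR : (0 : ℝ) < p := by exact_mod_cast hp0
  have hmpR : (p : ℝ) * m = n := by exact_mod_cast congrArg (fun x : ℕ => (x : ℝ)) hpm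
  have hc0 : (c : ZMod p) ≠ 0 := ((ZMod.isUnit_iff_coprime c p).mpr hc).ne_zero
  -- choose d
  set d0 : ℕ := ((c : ZMod p)⁻¹ * (i : ZMod p)).val with hd0_def
  set d : ℕ := if d0 = 0 then p else d0 with hd_def
  have hd0lt : d0 < p := ZMod.val_lt _
  have hd1 : 1 ≤ d := by rw [hd_def]; split_ifs with h <;> omega
  have hd2 : d ≤ p := by rw [hd_def]; split_ifs with h <;> omega
  have hdz : (d : ZMod p) = (c : ZMod p)⁻¹ * (i : ZMod p) := by
    rw [hd_def]
    split_ifs with h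
    · have h0 : (c : ZMod p)⁻¹ * (i : ZMod p) = 0 := by
        rw [← ZMod.val_eq_zero]; exact h
      rw [h0, ZMod.natCast_self]
    · rw [hd0_def, ZMod.natCast_val, ZMod.cast_id]
  have hcd : (c : ZMod p) * d = (i : ZMod p) := by
    rw [hdz, ← mul_assoc, mul_inv_cancel₀ hc0, one_mul]
  have hcdmod : (c * d) % p = i := by
    have h1 : ((c * d : ℕ) : ZMod p) = ((i : ℕ) : ZMod p) := by push_cast; exact hcd
    have h2 : (c * d) % p = i % p := (ZMod.natCast_eq_natCast_iff _ _ _).mp h1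
    rw [h2, Nat.mod_eq_of_lt hi]
  -- the set equality
  have hSeq : {x : ℝ | ∃ j : ℕ, 1 ≤ j ∧ j ≤ n ∧ (c * j) % p = i ∧
          x = Int.fract ((a : ℝ) * j / n)} =
        {x : ℝ | ∃ j : ℕ, j < m ∧
          x = Int.fract ((a : ℝ) * d / n + (j : ℝ) * p / n)} := by
    ext x
    simp only [Set.mem_setOf_eq]
    constructor
    · rintro ⟨j, hj1, hjn, hcj, rfl⟩
      have hjd : (j : ZMod p) = (d : ZMod p) := by
        have h1 : (c : ZMod p) * j = (i : ZMod p) := by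
          have h0 : ((c * j : ℕ) : ZMod p) = ((i : ℕ) : ZMod p) := by
            rw [ZMod.natCast_eq_natCast_iff]
            show (c * j) % p = i % p
            rw [hcj, Nat.mod_eq_of_lt hi]
          push_cast at h0; exact h0
        exact mul_left_cancel₀ hc0 (h1.trans hcd.symm)
      have hjd' : j % p = d % p := (ZMod.natCast_eq_natCast_iff _ _ _).mp hjd
      have hdj : d ≤ j := by
        by_contra h
        push_neg at h
        have hdvd : p ∣ d - j := (Nat.modEq_iff_dvd' h.le).mp hjd'
        have := Nat.le_of_dvd (by omega) hdvd
        omega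
      obtain ⟨k, hk⟩ := (Nat.modEq_iff_dvd' hdj).mp hjd'.symm
      have hkm : k < m := by
        have h2 : p * k < p * m := by omega
        exact Nat.lt_of_mul_lt_mul_left h2
      refine ⟨(a * k) % m, Nat.mod_lt _ hm, ?_⟩
      have h1 : (a : ℝ) * j / n = (a : ℝ) * d / n + ((a * k : ℕ) : ℝ) * p / n := by
        have hj : (j : ℝ) = (d : ℝ) + (p : ℝ) * k := by
          have : j = d + p * k := by omega
          rw [this]; push_cast; ring
        rw [hj]; push_cast; ring
      rw [h1]
      refine fract_shift n p m hn hpm _ _ _ ?_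
      have h3 : m ∣ a * k - (a * k) % m := Nat.dvd_sub_mod _
      have h4 := Int.natCast_dvd_natCast.mpr h3
      rwa [Nat.cast_sub (Nat.mod_le _ _)] at h4
    · rintro ⟨j', hj', rfl⟩
      set k : ℕ := ((a : ZMod m)⁻¹ * (j' : ZMod m)).val with hk_def
      have hklt : k < m := ZMod.val_lt _
      have haunit : IsUnit (a : ZMod m) := (ZMod.isUnit_iff_coprime a m).mpr ham
      have hak : ((a * k : ℕ) : ZMod m) = ((j' : ℕ) : ZMod m) := by
        push_cast
        rw [hk_def]
        simp only [ZMod.natCast_val, ZMod.cast_id]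
        rw [← mul_assoc, ZMod.mul_inv_of_unit _ haunit, one_mul]
      refine ⟨d + p * k, by omega, ?_, ?_, ?_⟩
      · have h2 : p * (k + 1) ≤ p * m := Nat.mul_le_mul_left p hklt
        rw [Nat.mul_succ] at h2
        omega
      · have h1 : ((c * (d + p * k) : ℕ) : ZMod p) = ((i : ℕ) : ZMod p) := by
          have : ((c * (d + p * k) : ℕ) : ZMod p) = (c : ZMod p) * d := by
            push_cast [ZMod.natCast_self]; ring
          rw [this, hcd]
        have h2 : (c * (d + p * k)) % p = i % p := (ZMod.natCast_eq_natCast_iff _ _ _).mp h1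
        rw [h2, Nat.mod_eq_of_lt hi]
      · have h1 : (a : ℝ) * (d + p * k : ℕ) / n =
            (a : ℝ) * d / n + ((a * k : ℕ) : ℝ) * p / n := by
          push_cast; ring
        rw [h1]
        refine fract_shift n p m hn hpm _ _ _ ?_
        have h2 : a * k ≡ j' [MOD m] := (ZMod.natCast_eq_natCast_iff _ _ _).mp hak
        exact h2.dvd
  refine ⟨d, hd1, hd2, hSeq, ?_⟩
  rw [hSeq]
  -- cardinality
  have himg : {x : ℝ | ∃ j : ℕ, j < m ∧
      x = Int.fract ((a : ℝ) * d / n + (j : ℝ) * p / n)} =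
      (fun j : ℕ => Int.fract ((a : ℝ) * d / n + (j : ℝ) * p / n)) '' ↑(Finset.range m) := by
    ext x
    simp only [Set.mem_setOf_eq, Set.mem_image, Finset.coe_range, Set.mem_Iio]
    exact ⟨fun ⟨j, hj, hx⟩ => ⟨j, hj, hx.symm⟩, fun ⟨j, hj, hx⟩ => ⟨j, hj, hx.symm⟩⟩
  rw [himg, Set.ncard_image_of_injOn, Set.ncard_coe_finset, Finset.card_range]
  -- injectivity
  intro k1 hk1 k2 hk2 heq
  simp only [Finset.coe_range, Set.mem_Iio] at hk1 hk2
  set t : ℝ := (a : ℝ) * d / n with ht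
  have hbound : ∀ k : ℕ, k < m → 0 ≤ (k : ℝ) * p / n ∧ (k : ℝ) * p / n < 1 := by
    intro k hk
    have hkR : (k : ℝ) < m := by exact_mod_cast hk
    constructor
    · positivity
    · rw [div_lt_one hnR]
      nlinarith
  obtain ⟨hu0, hu1⟩ := hbound k1 hk1
  obtain ⟨hv0, hv1⟩ := hbound k2 hk2
  have hfl : ((⌊t + (k1 : ℝ) * p / n⌋ - ⌊t + (k2 : ℝ) * p / n⌋ : ℤ) : ℝ) =
      (k1 : ℝ) * p / n - (k2 : ℝ) * p / n := by
    simp only [Int.fract] at heq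
    push_cast
    linarith
  have habs : |(⌊t + (k1 : ℝ) * p / n⌋ - ⌊t + (k2 : ℝ) * p / n⌋ : ℤ)| < 1 := by
    have : |((⌊t + (k1 : ℝ) * p / n⌋ - ⌊t + (k2 : ℝ) * p / n⌋ : ℤ) : ℝ)| < 1 := by
      rw [hfl, abs_lt]; constructor <;> linarith
    exact_mod_cast this
  have hz : (⌊t + (k1 : ℝ) * p / n⌋ - ⌊t + (k2 : ℝ) * p / n⌋ : ℤ) = 0 := by
    rw [abs_lt] at habs; omega
  rw [hz] at hfl
  have h5 : (k1 : ℝ) * p / n = (k2 : ℝ) * p / n := by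
    simp only [Int.cast_zero] at hfl; linarith
  have h6 : (k1 : ℝ) * p = (k2 : ℝ) * p := by
    exact (div_left_inj' hn0).mp h5
  have h7 : (k1 : ℝ) = k2 := mul_right_cancel₀ hpR.ne' h6
  exact_mod_cast h7
end

section
/- Let n be an odd prime and let a, b be integers with 1 ≤ a, b ≤ n-1 such that d = ‖a⁻¹b‖ is even. Then |Σ_{k=1}^{n} sign(cos(2πak/n)) sign(cos(2πbk/n))| ≤ C·d for an absolute constant C. -/
open Real Finset

def Pp (n v : ℕ) : Prop := 4 * v < n ∨ 3 * n < 4 * v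
instance : ∀ n v, Decidable (Pp n v) := fun _ _ => inferInstanceAs (Decidable (_ ∨ _))
noncomputable def Gv (n : ℕ) (y : ZMod n) : ℝ := if Pp n y.val then 1 else -1
lemma abs_Gv (n : ℕ) (y : ZMod n) : |Gv n y| = 1 := by
  unfold Gv; split_ifs <;> norm_num

lemma card_filter_le (n : ℕ) [NeZero n] (p : ZMod n → Prop) [DecidablePred p]
    (T : Finset ℕ) (hmem : ∀ y : ZMod n, p y → y.val ∈ T) :
    (Finset.univ.filter p).card ≤ T.card := by
  apply Finset.card_le_card_of_injOn ZMod.val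
  · intro y hy; exact hmem y (Finset.mem_filter.mp hy).2
  · exact (ZMod.val_injective n).injOn

lemma flip_window (n v z : ℕ) (hodd : n % 2 = 1) (hv : v < n)
    (hzlt : z < n) (hz : z = v + (n+1)/2 ∨ z + n = v + (n+1)/2)
    (hbad : ¬ (Pp n z ↔ ¬ Pp n v)) :
    v ∈ Finset.Icc (n/4 - 1) (n/4 + 1) ∪ Finset.Icc (3*n/4 - 1) (3*n/4 + 1) := by
  simp only [Finset.mem_union, Finset.mem_Icc]; unfold Pp at hbad; omega

lemma shift_window (n v z ev w : ℕ) (hodd : n % 2 = 1) (hv : v < n)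
    (hev : ev < n) (hw : ev ≤ w ∨ n - ev ≤ w)
    (hzlt : z < n) (hz : z = v + ev ∨ z + n = v + ev)
    (hbad : ¬ (Pp n z ↔ Pp n v)) :
    v ∈ Finset.Icc (n/4 - (w+1)) (n/4 + (w+1)) ∪
        Finset.Icc (3*n/4 - (w+1)) (3*n/4 + (w+1)) := by
  simp only [Finset.mem_union, Finset.mem_Icc]; unfold Pp at hbad; omega

lemma key (n : ℕ) [Fact n.Prime] [NeZero n] (hodd : n % 2 = 1) (hn : 3 ≤ n)
    (c : ZMod n) (hc : c ≠ 0) (d : ℕ)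
    (hd : d = min c.val (n - c.val)) (heven : Even d) :
    |∑ y : ZMod n, Gv n y * Gv n (c * y)| ≤ 2 * d + 12 := by
  obtain ⟨w, hw⟩ := heven
  have hcv1 : 1 ≤ c.val := by
    have := (ZMod.val_eq_zero c).not.mpr hc; omega
  have hcvn : c.val < n := ZMod.val_lt c
  have hd2 : 2 ≤ d := by omega
  have hdn : 2 * d ≤ n := by omega
  have hw1 : 1 ≤ w := by omega
  -- the half-period shift
  set h : ZMod n := (((n+1)/2 : ℕ) : ZMod n) with hhdef
  have hhval : h.val = (n+1)/2 := by
    rw [hhdef, ZMod.val_natCast, Nat.mod_eq_of_lt (by omega)]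
  set e : ZMod n := c * h with hedef
  -- compute e.val
  have hcases : c.val = d ∨ c.val = n - d := by omega
  have heval : e.val = w ∨ e.val = n - w := by
    have hkey : ∀ m : ℕ, m = d ∨ m = n - d → ((m : ZMod n) * h).val = w ∨ ((m : ZMod n) * h).val = n - w := by
      intro m hm
      have hdw : ((d : ZMod n) * h).val = w := by
        have : (d : ZMod n) * h = ((d * ((n+1)/2) : ℕ) : ZMod n) := by push_cast; ring
        rw [this, ZMod.val_natCast]
        have h2 : d * ((n+1)/2) = n * w + w := by
          have h3 : (n+1)/2 + (n+1)/2 = n + 1 := by omega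
          calc d * ((n+1)/2) = (w + w) * ((n+1)/2) := by rw [hw]
            _ = w * ((n+1)/2 + (n+1)/2) := by ring
            _ = w * (n+1) := by rw [h3]
            _ = n * w + w := by ring
        rw [h2, Nat.mul_add_mod, Nat.mod_eq_of_lt (by omega)]
      rcases hm with hm | hm
      · left; rw [hm]; exact hdw
      · right
        have hmneg : ((m : ZMod n) : ZMod n) = -((d : ZMod n)) := by
          rw [hm, Nat.cast_sub (by omega), ZMod.natCast_self, zero_sub]
        rw [hmneg, neg_mul, ZMod.neg_val, if_neg, hdw]
        intro h0
        rw [h0] at hdw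
        simp [ZMod.val_zero] at hdw
        omega
    have := hkey c.val hcases
    rwa [ZMod.natCast_rightInverse c] at this
  have hew : e.val ≤ w ∨ n - e.val ≤ w := by
    rcases heval with h1 | h1 <;> omega
  -- the sum S
  set S : ℝ := ∑ y : ZMod n, Gv n y * Gv n (c * y) with hSdef
  have hre : ∑ y : ZMod n, Gv n (y + h) * Gv n (c * y + e) = S := by
    rw [hSdef]
    apply Fintype.sum_equiv (Equiv.addRight h)
    intro y
    simp only [Equiv.coe_addRight]
    rw [mul_add, hedef]
  -- bad sets
  set B1 : Finset (ZMod n) :=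
    Finset.univ.filter (fun y : ZMod n => ¬ (Pp n (y + h).val ↔ ¬ Pp n y.val)) with hB1
  set B2 : Finset (ZMod n) :=
    Finset.univ.filter (fun y : ZMod n => ¬ (Pp n (c * y + e).val ↔ Pp n (c * y).val)) with hB2
  have hptwise : ∀ y : ZMod n,
      |Gv n y * Gv n (c * y) + Gv n (y + h) * Gv n (c * y + e)| ≤
        (if y ∈ B1 ∨ y ∈ B2 then 2 else 0) := by
    intro y
    by_cases hy : y ∈ B1 ∨ y ∈ B2
    · rw [if_pos hy]
      calc |Gv n y * Gv n (c * y) + Gv n (y + h) * Gv n (c * y + e)|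
          ≤ |Gv n y * Gv n (c * y)| + |Gv n (y + h) * Gv n (c * y + e)| := abs_add_le _ _
        _ = 2 := by rw [abs_mul, abs_mul, abs_Gv, abs_Gv, abs_Gv, abs_Gv]; norm_num
    · rw [if_neg hy]
      push_neg at hy
      obtain ⟨hy1, hy2⟩ := hy
      rw [hB1, Finset.mem_filter] at hy1
      rw [hB2, Finset.mem_filter] at hy2
      simp only [Finset.mem_univ, true_and, not_not] at hy1 hy2
      have e1 : Gv n (y + h) = - Gv n y := by
        unfold Gv; by_cases hp1 : Pp n y.val
        · rw [if_neg (fun hh => (hy1.mp hh) hp1), if_pos hp1] <;> norm_num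
        · rw [if_pos (hy1.mpr hp1), if_neg hp1] <;> norm_num
      have e2 : Gv n (c * y + e) = Gv n (c * y) := by
        unfold Gv; by_cases hp1 : Pp n (c * y).val
        · rw [if_pos (hy2.mpr hp1), if_pos hp1]
        · rw [if_neg (fun hh => hp1 (hy2.mp hh)), if_neg hp1]
      rw [e1, e2]; ring_nf
      simp
  have habs : |S + S| ≤ 2 * ((B1 ∪ B2).card : ℝ) := by
    have h2S : S + S = ∑ y : ZMod n, (Gv n y * Gv n (c * y) + Gv n (y + h) * Gv n (c * y + e)) := by
      rw [Finset.sum_add_distrib, hre, hSdef]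
    rw [h2S]
    calc |∑ y : ZMod n, (Gv n y * Gv n (c * y) + Gv n (y + h) * Gv n (c * y + e))|
        ≤ ∑ y : ZMod n, |Gv n y * Gv n (c * y) + Gv n (y + h) * Gv n (c * y + e)| :=
          Finset.abs_sum_le_sum_abs _ _
      _ ≤ ∑ y : ZMod n, (if y ∈ B1 ∨ y ∈ B2 then (2:ℝ) else 0) :=
          Finset.sum_le_sum (fun y _ => hptwise y)
      _ = ∑ y : ZMod n, (if y ∈ B1 ∪ B2 then (2:ℝ) else 0) := by
          apply Finset.sum_congr rfl; intro y _; simp [Finset.mem_union]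
      _ = 2 * ((B1 ∪ B2).card : ℝ) := by
          rw [Finset.sum_ite_mem, Finset.univ_inter, Finset.sum_const]
          simp [mul_comm]
  -- card bounds
  have hcard1 : B1.card ≤ 6 := by
    have := card_filter_le n _ (Finset.Icc (n/4 - 1) (n/4 + 1) ∪ Finset.Icc (3*n/4 - 1) (3*n/4 + 1))
      (fun y hy => by
        apply flip_window n y.val (y + h).val hodd (ZMod.val_lt y) (ZMod.val_lt _) _ hy
        have : (y + h).val = (y.val + (n+1)/2) % n := by rw [ZMod.val_add, hhval]
        rcases Nat.lt_or_ge (y.val + (n+1)/2) n with hlt | hge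
        · left; rw [this, Nat.mod_eq_of_lt hlt]
        · right
          rw [this, Nat.mod_eq_sub_mod hge,
            Nat.mod_eq_of_lt (by have := ZMod.val_lt y; omega)]
          have := ZMod.val_lt y; omega)
    refine le_trans this (le_trans (Finset.card_union_le _ _) ?_)
    rw [Nat.card_Icc, Nat.card_Icc]; omega
  have hcard2 : B2.card ≤ 4 * w + 6 := by
    have hbij : B2.card = (Finset.univ.filter
        (fun z : ZMod n => ¬ (Pp n (z + e).val ↔ Pp n z.val))).card := by
      apply Finset.card_nbij' (fun y => c * y) (fun z => c⁻¹ * z)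
      · intro y hy
        rw [hB2, Finset.mem_coe, Finset.mem_filter] at hy
        simp only [Finset.mem_coe, Finset.mem_filter, Finset.mem_univ, true_and]
        exact hy.2
      · intro z hz
        simp only [Finset.mem_coe, Finset.mem_filter, Finset.mem_univ, true_and] at hz
        rw [hB2, Finset.mem_coe, Finset.mem_filter]
        refine ⟨Finset.mem_univ _, ?_⟩
        beta_reduce; rwa [← mul_assoc, mul_inv_cancel₀ hc, one_mul]
      · intro y _; beta_reduce; rw [← mul_assoc, inv_mul_cancel₀ hc, one_mul]
      · intro z _; beta_reduce; rw [← mul_assoc, mul_inv_cancel₀ hc, one_mul]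
    rw [hbij]
    have := card_filter_le n _
      (Finset.Icc (n/4 - (w+1)) (n/4 + (w+1)) ∪ Finset.Icc (3*n/4 - (w+1)) (3*n/4 + (w+1)))
      (fun z hz => by
        apply shift_window n z.val (z + e).val e.val w hodd (ZMod.val_lt z)
          (ZMod.val_lt e) hew (ZMod.val_lt _) _ hz
        have h' : (z + e).val = (z.val + e.val) % n := ZMod.val_add z e
        rcases Nat.lt_or_ge (z.val + e.val) n with hlt | hge
        · left; rw [h', Nat.mod_eq_of_lt hlt]
        · right
          rw [h', Nat.mod_eq_sub_mod hge,
            Nat.mod_eq_of_lt (by have := ZMod.val_lt z; have := ZMod.val_lt e; omega)]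
          have := ZMod.val_lt z; have := ZMod.val_lt e; omega)
    refine le_trans this (le_trans (Finset.card_union_le _ _) ?_)
    rw [Nat.card_Icc, Nat.card_Icc]; omega
  have hcards : ((B1 ∪ B2).card : ℝ) ≤ (2 * d + 12 : ℕ) := by
    have h1 : (B1 ∪ B2).card ≤ B1.card + B2.card := Finset.card_union_le _ _
    have : (B1 ∪ B2).card ≤ 2 * d + 12 := by omega
    exact_mod_cast this
  have : |S + S| ≤ 2 * (2 * d + 12 : ℕ) := le_trans habs (by linarith)
  have habs2 : |S + S| = 2 * |S| := by rw [← two_mul, abs_mul]; norm_num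
  push_cast at this ⊢
  linarith [this, habs2 ▸ this]
lemma sgn_cos_eq (n : ℕ) (hn : 3 ≤ n) (hodd : n % 2 = 1) (j : ℕ) :
    sgn (Real.cos (2 * π * j / n)) = if Pp n (j % n) then 1 else -1 := by
  have hn0 : (n : ℝ) > 0 := by positivity
  have hr : j % n < n := Nat.mod_lt _ (by omega)
  have hjr : (j : ℝ) = (j / n : ℕ) * n + (j % n : ℕ) := by
    have := Nat.div_add_mod j n
    push_cast
    nlinarith [this, (by exact_mod_cast congrArg (Nat.cast : ℕ → ℝ) this.symm : (j:ℝ) = n * (j/n:ℕ) + (j % n : ℕ))]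
  have harg : 2 * π * j / n = 2 * π * (j % n : ℕ) / n + (j / n : ℕ) * (2 * π) := by
    rw [hjr]; field_simp; ring
  rw [harg, Real.cos_add_nat_mul_two_pi]
  set r : ℕ := j % n with hrdef
  by_cases hP : Pp n r
  · rw [if_pos hP]
    rcases hP with h4 | h4
    · have h4' : (4 * r : ℝ) < n := by exact_mod_cast h4
      have hcos : 0 ≤ Real.cos (2 * π * r / n) := by
        apply Real.cos_nonneg_of_mem_Icc
        constructor
        · have : (0:ℝ) ≤ 2 * π * r / n := by positivity
          linarith [Real.pi_pos]
        · rw [div_le_iff₀ hn0]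
          nlinarith [Real.pi_pos]
      unfold sgn; rw [if_pos hcos]
    · have h4' : (3 * n : ℝ) < 4 * r := by exact_mod_cast h4
      have hrn : (r : ℝ) < n := by exact_mod_cast hr
      have hcos : 0 ≤ Real.cos (2 * π * r / n) := by
        rw [← Real.cos_sub_two_pi]
        apply Real.cos_nonneg_of_mem_Icc
        have hge : 3 * π / 2 ≤ 2 * π * r / n := by
          rw [le_div_iff₀ hn0]; nlinarith [Real.pi_pos]
        have hle : 2 * π * r / n ≤ 2 * π := by
          rw [div_le_iff₀ hn0]; nlinarith [Real.pi_pos]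
        constructor
        · linarith [Real.pi_pos]
        · linarith [Real.pi_pos]
      unfold sgn; rw [if_pos hcos]
  · rw [if_neg hP]
    unfold Pp at hP; push_neg at hP
    obtain ⟨h1, h2⟩ := hP
    have h1' : n < 4 * r := by omega
    have h2' : 4 * r < 3 * n := by omega
    have h1r : (n : ℝ) < 4 * r := by exact_mod_cast h1'
    have h2r : (4 * r : ℝ) < 3 * n := by exact_mod_cast h2'
    have hcos : Real.cos (2 * π * r / n) < 0 := by
      apply Real.cos_neg_of_pi_div_two_lt_of_lt
      · rw [lt_div_iff₀ hn0]; nlinarith [Real.pi_pos]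
      · rw [div_lt_iff₀ hn0]; nlinarith [Real.pi_pos]
    unfold sgn; rw [if_neg (by linarith)]

theorem stmt15 :
    ∃ C : ℝ, 0 < C ∧
      ∀ (n : ℕ), n.Prime → Odd n → ∀ (a b : ℕ), 1 ≤ a → a ≤ n - 1 → 1 ≤ b → b ≤ n - 1 →
        ∀ (d : ℕ), d = min (((a : ZMod n)⁻¹ * (b : ZMod n)).val)
            (n - ((a : ZMod n)⁻¹ * (b : ZMod n)).val) →
          Even d →
          |∑ k ∈ Finset.Icc 1 n,
              sgn (Real.cos (2 * π * a * k / n)) * sgn (Real.cos (2 * π * b * k / n))| ≤ C * d := by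
  refine ⟨10, by norm_num, ?_⟩
  intro n hp hoddn a b ha1 ha2 hb1 hb2 d hd hdeven
  haveI : Fact n.Prime := ⟨hp⟩
  haveI : NeZero n := ⟨hp.pos.ne'⟩
  have hodd : n % 2 = 1 := Nat.odd_iff.mp hoddn
  have hn : 3 ≤ n := by
    have := hp.two_le; omega
  set A : ZMod n := (a : ZMod n) with hA
  set B : ZMod n := (b : ZMod n) with hB
  have hAne : A ≠ 0 := by
    rw [hA, Ne, ZMod.natCast_eq_zero_iff]
    intro hdvd
    have := Nat.le_of_dvd (by omega) hdvd; omega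
  have hBne : B ≠ 0 := by
    rw [hB, Ne, ZMod.natCast_eq_zero_iff]
    intro hdvd
    have := Nat.le_of_dvd (by omega) hdvd; omega
  set c : ZMod n := A⁻¹ * B with hc
  have hcne : c ≠ 0 := mul_ne_zero (inv_ne_zero hAne) hBne
  -- rewrite terms via sgn_cos_eq
  have hterm : ∀ (m : ℕ) (k : ℕ),
      sgn (Real.cos (2 * π * m * k / n)) = Gv n ((m : ZMod n) * (k : ZMod n)) := by
    intro m k
    have h1 : (2 * π * m * k / n : ℝ) = 2 * π * ((m * k : ℕ) : ℝ) / n := by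
      push_cast; ring
    rw [h1, sgn_cos_eq n hn hodd (m * k)]
    unfold Gv
    have : ((m : ZMod n) * (k : ZMod n)).val = (m * k) % n := by
      rw [← Nat.cast_mul, ZMod.val_natCast]
    rw [this]
  -- sum over Icc 1 n equals sum over ZMod n
  have hsum1 : ∑ k ∈ Finset.Icc 1 n,
      sgn (Real.cos (2 * π * a * k / n)) * sgn (Real.cos (2 * π * b * k / n))
      = ∑ x : ZMod n, Gv n (A * x) * Gv n (B * x) := by
    rw [show (Finset.univ : Finset (ZMod n)) = Finset.univ from rfl]
    apply Finset.sum_nbij' (fun k : ℕ => (k : ZMod n))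
      (fun x : ZMod n => if x.val = 0 then n else x.val)
    · intro k _; exact Finset.mem_univ _
    · intro x _
      rw [Finset.mem_Icc]
      have := ZMod.val_lt x
      split_ifs <;> omega
    · intro k hk
      rw [Finset.mem_Icc] at hk
      have hv : ((k : ZMod n)).val = k % n := ZMod.val_natCast n k
      by_cases hkn : k = n
      · rw [hv]
        simp [hkn, Nat.mod_self]
      · have hklt : k < n := by omega
        rw [hv, Nat.mod_eq_of_lt hklt]
        rw [if_neg (by omega)]
    · intro x _
      split_ifs with h0
      · rw [ZMod.natCast_self]
        exact ((ZMod.val_eq_zero x).mp h0).symm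
      · exact ZMod.natCast_rightInverse x
    · intro k hk
      rw [hterm a k, hterm b k]
  -- reindex x ↦ A * x
  have hsum2 : ∑ x : ZMod n, Gv n (A * x) * Gv n (B * x)
      = ∑ y : ZMod n, Gv n y * Gv n (c * y) := by
    apply Fintype.sum_equiv (Equiv.mulLeft₀ A hAne)
    intro x
    show Gv n (A * x) * Gv n (B * x) = Gv n (A * x) * Gv n (c * (A * x))
    have : c * (A * x) = B * x := by
      rw [hc]
      field_simp
    rw [this]
  rw [hsum1, hsum2]
  have hkey := key n hodd hn c hcne d hd hdeven
  have hd2 : 2 ≤ d := by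
    have hcv1 : 1 ≤ c.val := by
      have := (ZMod.val_eq_zero c).not.mpr hcne; omega
    have hcvn : c.val < n := ZMod.val_lt c
    obtain ⟨w, hw⟩ := hdeven
    omega
  have : (2 * d + 12 : ℝ) ≤ 10 * d := by
    have : (2:ℝ) ≤ d := by exact_mod_cast hd2
    linarith
  calc |∑ y : ZMod n, Gv n y * Gv n (c * y)| ≤ 2 * d + 12 := by exact_mod_cast hkey
    _ ≤ 10 * d := this
end
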